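/- arXiv:2303.02122 — 2 statements merged into one kernel-verified Lean document; each statement's English description precedes it below -/
import Mathlib

section
/- If a Banach space $X$ has property $\mathcal{E}'$ (every weak*-sequentially closed convex subset of $B_{X^*}$ is weak*-closed), then $X$ has property $(\mathcal{C})$ of Corson, i.e., every point in the weak*-closure of any convex set $C \subseteq B_{X^*}$ lies in the weak*-closure of a countable subset of $C$. -/
open Filter Topology

/-!
The points reachable from `C` as weak*-limits of countable subsets of `C` form a convex set,
sandwiched between `C` and its closure, and it is sequentially closed because a countable union
of countable sets is countable. Property `ℰ'` makes it weak*-closed, so it contains `closure C`.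
-/

section CountableClosure

variable {E : Type*} [TopologicalSpace E]

def countableClosure (C : Set E) : Set E :=
  {x | ∃ D ⊆ C, D.Countable ∧ x ∈ closure D}

theorem subset_countableClosure (C : Set E) : C ⊆ countableClosure C := fun c hc =>
  ⟨{c}, Set.singleton_subset_iff.2 hc, Set.countable_singleton c, subset_closure rfl⟩

theorem countableClosure_subset_closure (C : Set E) : countableClosure C ⊆ closure C := by
  rintro x ⟨D, hDC, -, hx⟩
  exact closure_mono hDC hx

theorem isSeqClosed_countableClosure (C : Set E) : IsSeqClosed (countableClosure C) := by
  intro u x hu hux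
  choose D hDC hDc huD using hu
  refine ⟨⋃ n, D n, Set.iUnion_subset hDC, Set.countable_iUnion hDc, ?_⟩
  exact isClosed_closure.mem_of_tendsto hux
    (Eventually.of_forall fun n => closure_mono (Set.subset_iUnion D n) (huD n))

theorem Convex.countableClosure {𝕜 : Type*} [Semiring 𝕜] [PartialOrder 𝕜]
    [AddCommMonoid E] [Module 𝕜 E] [ContinuousAdd E] [ContinuousConstSMul 𝕜 E]
    {C : Set E} (hC : Convex 𝕜 C) : Convex 𝕜 (countableClosure C) := by
  rintro x ⟨D₁, hD₁, hc₁, hx⟩ y ⟨D₂, hD₂, hc₂, hy⟩ a b ha hb hab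
  let combo : E → E → E := fun x y => a • x + b • y
  refine ⟨Set.image2 combo D₁ D₂, ?_, hc₁.image2 hc₂ combo, ?_⟩
  · rintro _ ⟨x, hx, y, hy, rfl⟩
    exact hC (hD₁ hx) (hD₂ hy) ha hb hab
  · exact map_mem_closure₂ (f := combo) ((continuous_fst.const_smul a).add
      (continuous_snd.const_smul b)) hx hy fun x hx y hy => Set.mem_image2_of_mem hx hy

end CountableClosure

theorem propE'_implies_propC_general
    (X : Type*) [NormedAddCommGroup X] [NormedSpace ℝ X]
    (B : Set (WeakDual ℝ X))
    (hB : B = {f : WeakDual ℝ X | ‖WeakDual.toStrongDual f‖ ≤ 1})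
    (hE' : ∀ A ⊆ B, Convex ℝ A →
      (∀ (u : ℕ → WeakDual ℝ X) (g : WeakDual ℝ X),
        (∀ n, u n ∈ A) → Tendsto u atTop (𝓝 g) → g ∈ A) →
      IsClosed A) :
    ∀ C ⊆ B, Convex ℝ C → ∀ f ∈ closure C,
      ∃ D ⊆ C, D.Countable ∧ f ∈ closure D := by
  intro C hCB hC f hf
  have hB_closed : IsClosed B := by
    simpa [hB, Set.preimage, dist_eq_norm] using
      WeakDual.isClosed_closedBall (𝕜 := ℝ) (E := X) 0 1
  have h_sub : countableClosure C ⊆ B :=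
    (countableClosure_subset_closure C).trans (closure_minimal hCB hB_closed)
  have h_closed : IsClosed (countableClosure C) :=
    hE' _ h_sub hC.countableClosure fun _ _ hu hug => isSeqClosed_countableClosure C hu hug
  exact closure_minimal (subset_countableClosure C) h_closed hf

/-- If a Banach space `X` has property `ℰ'` (every weak*-sequentially closed convex
subset of the dual unit ball is weak*-closed), then `X` has property (C) of Corson
in Pol's form. -/
theorem propE'_implies_propC
    (X : Type*) [NormedAddCommGroup X] [NormedSpace ℝ X] [CompleteSpace X]
    (B : Set (WeakDual ℝ X))
    (hB : B = {f : WeakDual ℝ X | ‖WeakDual.toStrongDual f‖ ≤ 1})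
    (hE' : ∀ A ⊆ B, Convex ℝ A →
      (∀ (u : ℕ → WeakDual ℝ X) (g : WeakDual ℝ X),
        (∀ n, u n ∈ A) → Tendsto u atTop (𝓝 g) → g ∈ A) →
      IsClosed A) :
    ∀ C ⊆ B, Convex ℝ C → ∀ f ∈ closure C,
      ∃ D ⊆ C, D.Countable ∧ f ∈ closure D :=
  propE'_implies_propC_general X B hB hE'
end

section
/- Let $(x_k^*)$ be a sequence in $B_{X^*}$ and $(\lambda^n)$ finitely supported convex coefficient sequences with $\lambda_k^n \to \lambda_k$ pointwise, such that each sequence $(\lambda_k^n)_n$ is eventually monotone. With $N_n = \{k : \lambda_k^n > \lambda_k\}$, the sequence $y_n^- := \sum_{k \notin N_n} \lambda_k^n x_k^*$ is norm-Cauchy in $X^*$, hence norm-convergent. -/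
/-!
The truncated coefficients `μₖⁿ = λₖⁿ · 1[λₖⁿ ≤ λₖ]` converge pointwise: if `(λₖⁿ)ₙ` is eventually
increasing, it stays below its limit, so `μₖⁿ = λₖⁿ → λₖ`; if it is eventually decreasing, it
stays above its limit, and `μₖⁿ` is eventually `0`, or eventually `λₖ` once `λₖⁿ` has reached `λₖ`.
Since `0 ≤ μₖⁿ ≤ λₖ` with `∑ λₖ < ∞` and `‖xₖ*‖ ≤ 1`, dominated convergence for series (Tannery's
theorem) in the complete space `X*` makes `yₙ⁻ = ∑ₖ μₖⁿ xₖ*` converge.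
-/

open Filter Topology

section Truncation

variable {α : Type*} [LinearOrder α] [TopologicalSpace α] [OrderClosedTopology α]
  {a : ℕ → α} {L : α} {N : ℕ}

lemma le_of_tendsto_of_monotoneOn_Ici (ha : Tendsto a atTop (𝓝 L))
    (hmono : MonotoneOn a (Set.Ici N)) {n : ℕ} (hn : N ≤ n) : a n ≤ L :=
  ge_of_tendsto ha <| (eventually_ge_atTop n).mono fun _ hm => hmono hn (hn.trans hm) hm

lemma le_of_tendsto_of_antitoneOn_Ici (ha : Tendsto a atTop (𝓝 L))
    (hanti : AntitoneOn a (Set.Ici N)) {n : ℕ} (hn : N ≤ n) : L ≤ a n :=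
  le_of_tendsto ha <| (eventually_ge_atTop n).mono fun _ hm => hanti hn (hn.trans hm) hm

lemma tendsto_ite_le_of_monotoneOn_Ici (b : α) (ha : Tendsto a atTop (𝓝 L))
    (hmono : MonotoneOn a (Set.Ici N)) :
    Tendsto (fun n => if a n ≤ L then a n else b) atTop (𝓝 L) :=
  ha.congr' <| (eventually_ge_atTop N).mono fun n hn => by
    simp only [if_pos (le_of_tendsto_of_monotoneOn_Ici ha hmono hn)]

lemma exists_tendsto_ite_le_of_antitoneOn_Ici (b : α) (ha : Tendsto a atTop (𝓝 L))
    (hanti : AntitoneOn a (Set.Ici N)) :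
    ∃ c, Tendsto (fun n => if a n ≤ L then a n else b) atTop (𝓝 c) := by
  have hge {n : ℕ} (hn : N ≤ n) : L ≤ a n := le_of_tendsto_of_antitoneOn_Ici ha hanti hn
  by_cases hreach : ∃ n, N ≤ n ∧ a n ≤ L
  · obtain ⟨n₀, hn₀, hle⟩ := hreach
    refine ⟨L, tendsto_const_nhds.congr' <| (eventually_ge_atTop n₀).mono fun m hm => ?_⟩
    have hm_eq : a m = L :=
      le_antisymm ((hanti hn₀ (hn₀.trans hm) hm).trans hle) (hge (hn₀.trans hm))
    simp [hm_eq]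
  · push Not at hreach
    refine ⟨b, tendsto_const_nhds.congr' <| (eventually_ge_atTop N).mono fun n hn => ?_⟩
    simp only [if_neg (hreach n hn).not_ge]

end Truncation

lemma tendsto_tsum_smul_of_norm_le {ι β 𝕜 E : Type*} {F : Filter ι} [NormedField 𝕜]
    [NormedAddCommGroup E] [NormedSpace 𝕜 E] [CompleteSpace E]
    {x : β → E} (hx : ∀ k, ‖x k‖ ≤ 1) {c : ι → β → 𝕜} {g : β → 𝕜} {bound : β → ℝ}
    (h_sum : Summable bound) (hc : ∀ k, Tendsto (c · k) F (𝓝 (g k)))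
    (h_bound : ∀ᶠ n in F, ∀ k, ‖c n k‖ ≤ bound k) :
    Tendsto (fun n => ∑' k, c n k • x k) F (𝓝 (∑' k, g k • x k)) :=
  tendsto_tsum_of_dominated_convergence h_sum (fun k => (hc k).smul_const (x k)) <|
    h_bound.mono fun n hn k => by
      simpa [norm_smul] using
        mul_le_mul (hn k) (hx k) (norm_nonneg _) ((norm_nonneg _).trans (hn k))

theorem yMinus_normCauchy_general
    (X : Type*) [NormedAddCommGroup X] [NormedSpace ℝ X]
    (x : ℕ → StrongDual ℝ X) (hx : ∀ k, ‖x k‖ ≤ 1)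
    (l : ℕ → ℕ → ℝ)
    (hrange : ∀ n k, l n k ∈ Set.Icc (0 : ℝ) 1)
    (lim : ℕ → ℝ)
    (hlim : ∀ k, Tendsto (fun n => l n k) atTop (𝓝 (lim k)))
    (hSlim : Summable lim)
    (hmono : ∀ k, ∃ N, (∀ m n', N ≤ m → m ≤ n' → l m k ≤ l n' k) ∨
      (∀ m n', N ≤ m → m ≤ n' → l n' k ≤ l m k)) :
    CauchySeq (fun n => ∑' k, (if l n k ≤ lim k then l n k else 0) • x k) ∧
      ∃ z : StrongDual ℝ X,
        Tendsto (fun n => ∑' k, (if l n k ≤ lim k then l n k else 0) • x k)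
          atTop (𝓝 z) := by
  have hlim_nonneg (k : ℕ) : 0 ≤ lim k := ge_of_tendsto' (hlim k) fun n => (hrange n k).1
  have htrunc (k : ℕ) :
      ∃ c, Tendsto (fun n => if l n k ≤ lim k then l n k else 0) atTop (𝓝 c) := by
    obtain ⟨N, hN | hN⟩ := hmono k
    · exact ⟨_, tendsto_ite_le_of_monotoneOn_Ici 0 (hlim k) fun m hm n _ hmn => hN m n hm hmn⟩
    · exact exists_tendsto_ite_le_of_antitoneOn_Ici 0 (hlim k) fun m hm n _ hmn => hN m n hm hmn
  choose g hg using htrunc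
  have hbound (n k : ℕ) : ‖if l n k ≤ lim k then l n k else 0‖ ≤ lim k := by
    split_ifs with hle
    · rwa [Real.norm_of_nonneg (hrange n k).1]
    · simpa using hlim_nonneg k
  have hconv := tendsto_tsum_smul_of_norm_le hx hSlim hg (Eventually.of_forall hbound)
  exact ⟨hconv.cauchySeq, _, hconv⟩

/-- With eventually monotone coefficient sequences, the sequence
`yₙ⁻ = ∑_{k ∉ Nₙ} λₖⁿ xₖ*` is norm-Cauchy, hence norm-convergent. -/
theorem yMinus_normCauchy
    (X : Type*) [NormedAddCommGroup X] [NormedSpace ℝ X] [CompleteSpace X]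
    (x : ℕ → StrongDual ℝ X) (hx : ∀ k, ‖x k‖ ≤ 1)
    (l : ℕ → ℕ → ℝ)
    (hrange : ∀ n k, l n k ∈ Set.Icc (0 : ℝ) 1)
    (hfin : ∀ n, (Function.support (l n)).Finite)
    (hsum : ∀ n, ∑' k, l n k = 1)
    (lim : ℕ → ℝ)
    (hlim : ∀ k, Tendsto (fun n => l n k) atTop (𝓝 (lim k)))
    (hSlim : Summable lim)
    (hmono : ∀ k, ∃ N, (∀ m n', N ≤ m → m ≤ n' → l m k ≤ l n' k) ∨
      (∀ m n', N ≤ m → m ≤ n' → l n' k ≤ l m k)) :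
    CauchySeq (fun n => ∑' k, (if l n k ≤ lim k then l n k else 0) • x k) ∧
      ∃ z : StrongDual ℝ X,
        Tendsto (fun n => ∑' k, (if l n k ≤ lim k then l n k else 0) • x k)
          atTop (𝓝 z) :=
  yMinus_normCauchy_general X x hx l hrange lim hlim hSlim hmono
end
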